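/- arXiv:2603.17578 — 2 statements merged into one kernel-verified Lean document; each statement's English description precedes it below -/
import Mathlib

section
/- The anti-plurality solution R^AP satisfies bottom-aligned consistency (BCON) but satisfies neither concatenation consistency (CCON) nor top-aligned consistency (TCON). -/
namespace SocRank

/-- A coalitional ranking (a weak order on a set of feasible nonempty coalitions),
represented by its list of equivalence classes, listed from best to worst. -/
structure CoalRanking (X : Type*) where
  classes : List (Finset (Finset X))
  class_nonempty : ∀ C ∈ classes, C.Nonempty
  coal_nonempty : ∀ C ∈ classes, ∀ S ∈ C, S.Nonempty
  classes_disjoint : classes.Pairwise Disjoint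

namespace CoalRanking

variable {X : Type*}

/-- The coalition domain `𝒟(≿)` of a coalitional ranking. -/
def domain [DecidableEq X] (r : CoalRanking X) : Finset (Finset X) :=
  r.classes.foldr (· ∪ ·) ∅

/-- The list of equivalence classes of the restriction of a ranking to a set `D`
of coalitions. -/
def restrictClasses [DecidableEq X] (r : CoalRanking X) (D : Finset (Finset X)) :
    List (Finset (Finset X)) :=
  (r.classes.map (· ∩ D)).filter (fun C => decide C.Nonempty)

/-- Merging two lists of equivalence classes by aligning them at the top. -/
def zipUnion [DecidableEq X] :
    List (Finset (Finset X)) → List (Finset (Finset X)) → List (Finset (Finset X))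
  | [], M => M
  | L, [] => L
  | A :: L, B :: M => (A ∪ B) :: zipUnion L M

/-- `r` is a sum of the disjoint rankings `r₁` and `r₂`: its domain is the union of
the two domains and its restriction to the domain of `rᵢ` is `rᵢ`. -/
def IsSum [DecidableEq X] (r r₁ r₂ : CoalRanking X) : Prop :=
  Disjoint r₁.domain r₂.domain ∧
  r.domain = r₁.domain ∪ r₂.domain ∧
  r.restrictClasses r₁.domain = r₁.classes ∧
  r.restrictClasses r₂.domain = r₂.classes

/-- `r` is the concatenation sum `r₁ · r₂` of the disjoint rankings `r₁` and `r₂`. -/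
def IsConcatSum [DecidableEq X] (r r₁ r₂ : CoalRanking X) : Prop :=
  Disjoint r₁.domain r₂.domain ∧ r.classes = r₁.classes ++ r₂.classes

/-- `r` is the top-aligned sum `r₁ ⊨ r₂` of the disjoint rankings `r₁` and `r₂`. -/
def IsTopAlignedSum [DecidableEq X] (r r₁ r₂ : CoalRanking X) : Prop :=
  Disjoint r₁.domain r₂.domain ∧ r.classes = zipUnion r₁.classes r₂.classes

/-- `r` is the bottom-aligned sum `r₁ ⫤ r₂` of the disjoint rankings `r₁` and `r₂`. -/
def IsBottomAlignedSum [DecidableEq X] (r r₁ r₂ : CoalRanking X) : Prop :=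
  Disjoint r₁.domain r₂.domain ∧
  r.classes = (zipUnion r₁.classes.reverse r₂.classes.reverse).reverse

/-- Renaming the individuals of a coalitional ranking by a permutation `σ` of `X`:
the ranking `≿^σ`. -/
def mapPerm [DecidableEq X] (σ : Equiv.Perm X) (r : CoalRanking X) : CoalRanking X where
  classes := r.classes.map (fun C => C.image (fun S => S.image σ))
  class_nonempty := by
    intro C hC
    simp only [List.mem_map] at hC
    obtain ⟨C₀, hC₀, rfl⟩ := hC
    exact (r.class_nonempty C₀ hC₀).image _
  coal_nonempty := by
    intro C hC S hS
    simp only [List.mem_map] at hC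
    obtain ⟨C₀, hC₀, rfl⟩ := hC
    simp only [Finset.mem_image] at hS
    obtain ⟨S₀, hS₀, rfl⟩ := hS
    exact (r.coal_nonempty C₀ hC₀ S₀ hS₀).image _
  classes_disjoint := by
    refine List.Pairwise.map _ (fun {A B} h => ?_) r.classes_disjoint
    exact (Finset.disjoint_image
      (Finset.image_injective σ.injective)).mpr h

/-- Renaming the coalitions of a coalitional ranking by a permutation `π` of the set of
coalitions (mapping nonempty sets to nonempty sets): the ranking `≿_π`. -/
def mapCoalPerm [DecidableEq X] (π : Equiv.Perm (Finset X))
    (hπ : ∀ S : Finset X, S.Nonempty → (π S).Nonempty) (r : CoalRanking X) :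
    CoalRanking X where
  classes := r.classes.map (fun C => C.image π)
  class_nonempty := by
    intro C hC
    simp only [List.mem_map] at hC
    obtain ⟨C₀, hC₀, rfl⟩ := hC
    exact (r.class_nonempty C₀ hC₀).image _
  coal_nonempty := by
    intro C hC S hS
    simp only [List.mem_map] at hC
    obtain ⟨C₀, hC₀, rfl⟩ := hC
    simp only [Finset.mem_image] at hS
    obtain ⟨S₀, hS₀, rfl⟩ := hS
    exact hπ S₀ (r.coal_nonempty C₀ hC₀ S₀ hS₀)
  classes_disjoint := by
    refine List.Pairwise.map _ (fun {A B} h => ?_) r.classes_disjoint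
    exact (Finset.disjoint_image π.injective).mpr h

end CoalRanking

open CoalRanking

variable {X : Type*}

/-- A social ranking solution: a map assigning to every coalitional ranking a binary
relation on the individuals. -/
abbrev SRSMap (X : Type*) := CoalRanking X → X → X → Prop

/-- The symmetric part `I` of the social ranking. -/
def Ind (R : SRSMap X) (r : CoalRanking X) (x y : X) : Prop := R r x y ∧ R r y x

/-- The asymmetric part `P` of the social ranking. -/
def Pref (R : SRSMap X) (r : CoalRanking X) (x y : X) : Prop := R r x y ∧ ¬ R r y x

/-- Conditions (1)-(4) of consistency for the triple `(r₁, r₂, r)`. -/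
def ConsistentAt (R : SRSMap X) (r₁ r₂ r : CoalRanking X) : Prop :=
  ∀ x y : X,
    (Ind R r₁ x y → Ind R r₂ x y → Ind R r x y) ∧
    (Ind R r₁ x y → Pref R r₂ x y → Pref R r x y) ∧
    (Pref R r₁ x y → Ind R r₂ x y → Pref R r x y) ∧
    (Pref R r₁ x y → Pref R r₂ x y → Pref R r x y)

/-- Consistency (CON). -/
def CON [DecidableEq X] (R : SRSMap X) : Prop :=
  ∀ r₁ r₂ r : CoalRanking X, IsSum r r₁ r₂ → ConsistentAt R r₁ r₂ r

/-- Concatenation consistency (CCON). -/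
def CCON [DecidableEq X] (R : SRSMap X) : Prop :=
  ∀ r₁ r₂ r : CoalRanking X, IsConcatSum r r₁ r₂ → ConsistentAt R r₁ r₂ r

/-- Top-aligned consistency (TCON). -/
def TCON [DecidableEq X] (R : SRSMap X) : Prop :=
  ∀ r₁ r₂ r : CoalRanking X, IsTopAlignedSum r r₁ r₂ → ConsistentAt R r₁ r₂ r

/-- Bottom-aligned consistency (BCON). -/
def BCON [DecidableEq X] (R : SRSMap X) : Prop :=
  ∀ r₁ r₂ r : CoalRanking X, IsBottomAlignedSum r r₁ r₂ → ConsistentAt R r₁ r₂ r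

/-- II-concatenation consistency. -/
def IICCON [DecidableEq X] (R : SRSMap X) : Prop :=
  ∀ r₁ r₂ r : CoalRanking X, IsConcatSum r r₁ r₂ →
    ∀ x y : X, Ind R r₁ x y → Ind R r₂ x y → Ind R r x y

/-- IP-concatenation consistency. -/
def IPCCON [DecidableEq X] (R : SRSMap X) : Prop :=
  ∀ r₁ r₂ r : CoalRanking X, IsConcatSum r r₁ r₂ →
    ∀ x y : X, Ind R r₁ x y → Pref R r₂ x y → Pref R r x y

/-- PI-concatenation consistency. -/
def PICCON [DecidableEq X] (R : SRSMap X) : Prop :=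
  ∀ r₁ r₂ r : CoalRanking X, IsConcatSum r r₁ r₂ →
    ∀ x y : X, Pref R r₁ x y → Ind R r₂ x y → Pref R r x y

/-- PP-concatenation consistency. -/
def PPCCON [DecidableEq X] (R : SRSMap X) : Prop :=
  ∀ r₁ r₂ r : CoalRanking X, IsConcatSum r r₁ r₂ →
    ∀ x y : X, Pref R r₁ x y → Pref R r₂ x y → Pref R r x y

/-- `x_k`: the number of coalitions of the class `C` containing `x`. -/
def cnt [DecidableEq X] (x : X) (C : Finset (Finset X)) : ℕ :=
  (C.filter (fun S => x ∈ S)).card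

/-- The vector `θ_≿(x) = (x₁, …, x_l)`. -/
def theta [DecidableEq X] (r : CoalRanking X) (x : X) : List ℕ :=
  r.classes.map (cnt x)

/-- `sign`: `1` on positive numbers, `0` otherwise. -/
def sgn (n : ℕ) : ℕ := if 0 < n then 1 else 0

/-- The vector `θ̇_≿(x) = (sign(x₁), …, sign(x_l))`. -/
def thetaDot [DecidableEq X] (r : CoalRanking X) (x : X) : List ℕ :=
  (theta r x).map sgn

/-- The lexicographic order `≥^L` on vectors (of equal length). -/
def lexGE : List ℕ → List ℕ → Prop
  | _, [] => True
  | [], _ :: _ => False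
  | a :: as, b :: bs => b < a ∨ (a = b ∧ lexGE as bs)

/-- The lexicographic excellence solution (lex-cel) `R^L`. -/
def lexcel [DecidableEq X] : SRSMap X := fun r x y => lexGE (theta r x) (theta r y)

/-- The sign lexicographic excellence solution (S lex-cel) `R^{SL}`. -/
def slexcel [DecidableEq X] : SRSMap X := fun r x y => lexGE (thetaDot r x) (thetaDot r y)

/-- The plurality solution `R^P`. -/
def plurality [DecidableEq X] : SRSMap X := fun r x y =>
  (theta r y).headD 0 ≤ (theta r x).headD 0

/-- The sign plurality solution `R^{SP}`. -/
def splurality [DecidableEq X] : SRSMap X := fun r x y =>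
  sgn ((theta r y).headD 0) ≤ sgn ((theta r x).headD 0)

/-- The anti-plurality solution `R^{AP}`. -/
def antiplurality [DecidableEq X] : SRSMap X := fun r x y =>
  (theta r x).getLastD 0 ≤ (theta r y).getLastD 0

/-- `e_≿(x)`: the largest `k` such that `x` belongs to every coalition of each of the
first `k` equivalence classes. -/
def eIIS [DecidableEq X] (r : CoalRanking X) (x : X) : ℕ :=
  (r.classes.takeWhile (fun C => decide (∀ S ∈ C, x ∈ S))).length

/-- The intersection initial segment solution (IIS) `R^{IIS}`. -/
def iis [DecidableEq X] : SRSMap X := fun r x y => eIIS r y ≤ eIIS r x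

/-- The index of the equivalence class a coalition belongs to. -/
def classIdx [DecidableEq X] (r : CoalRanking X) (S : Finset X) : ℕ :=
  r.classes.findIdx (fun C => decide (S ∈ C))

/-- `C_{xy}`: the number of CP comparisons in favour of `x` against `y`. -/
def cpCount [DecidableEq X] [Fintype X] (r : CoalRanking X) (x y : X) : ℕ :=
  ((Finset.univ : Finset (Finset X)).filter (fun S =>
    S.Nonempty ∧ x ∉ S ∧ y ∉ S ∧ insert x S ∈ r.domain ∧ insert y S ∈ r.domain ∧
    classIdx r (insert x S) < classIdx r (insert y S))).card

/-- The Ceteris Paribus majority solution `R^{CPM}`. -/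
def cpm [DecidableEq X] [Fintype X] : SRSMap X := fun r x y =>
  cpCount r y x ≤ cpCount r x y

/-- Neutrality (NT). -/
def NT [DecidableEq X] (R : SRSMap X) : Prop :=
  ∀ (σ : Equiv.Perm X) (r : CoalRanking X) (x y : X),
    R (r.mapPerm σ) (σ x) (σ y) ↔ R r x y

/-- Weak coalitional anonymity (WCA). -/
def WCA [DecidableEq X] (R : SRSMap X) : Prop :=
  ∀ (x y : X) (π : Equiv.Perm (Finset X))
    (hπ : ∀ S : Finset X, S.Nonempty → (π S).Nonempty),
    (∀ S : Finset X, x ∈ S → x ∈ π S) → (∀ S : Finset X, y ∈ S → y ∈ π S) →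
    ∀ r : CoalRanking X,
      (R (r.mapCoalPerm π hπ) x y ↔ R r x y) ∧ (R (r.mapCoalPerm π hπ) y x ↔ R r y x)

/-- The weak union very important person property (WUVIP). -/
def WUVIP (R : SRSMap X) : Prop :=
  ∀ (r : CoalRanking X) (A B : Finset (Finset X)), r.classes = [A, B] →
    ∀ x y : X, (∃ S ∈ A, x ∈ S) → (∀ S ∈ A, y ∉ S) → Pref R r x y

/-- All indifference all winners (AIAW). -/
def AIAW [DecidableEq X] (R : SRSMap X) : Prop :=
  ∀ r : CoalRanking X, r.classes.length ≤ 1 →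
    (∀ x y : X, (∃ S ∈ r.domain, x ∈ S) → (∃ S ∈ r.domain, y ∈ S) → Ind R r x y) ∧
    (∀ x z : X, (∃ S ∈ r.domain, x ∈ S) → (∀ S ∈ r.domain, z ∉ S) → Pref R r x z)

/-- Independence of the decomposition of the worst sets (IDWS). -/
def IDWS [DecidableEq X] (R : SRSMap X) : Prop :=
  ∀ (r r' : CoalRanking X) (L G : List (Finset (Finset X))) (W : Finset (Finset X)),
    L ≠ [] → r.classes = L ++ [W] → r'.classes = L ++ G →
    G.foldr (· ∪ ·) ∅ = W →
    ∀ x y : X, Pref R r x y → Pref R r' x y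

/-- Independence of the addition of the worst sets (IAWS). -/
def IAWS [DecidableEq X] (R : SRSMap X) : Prop :=
  ∀ (r r' : CoalRanking X) (G : Finset (Finset X)),
    r'.classes = r.classes ++ [G] → (∀ S ∈ G, S ∉ r.domain) →
    ∀ x y : X, Pref R r x y → Pref R r' x y

/-- Tops-only (TO). -/
def TO (R : SRSMap X) : Prop :=
  ∀ (r r' : CoalRanking X) (A : Finset (Finset X)),
    r.classes.head? = some A → r'.classes.head? = some A → R r = R r'

/-- The dual S lex-cel `R^{DSL}`. -/
def dslexcel [DecidableEq X] : SRSMap X := fun r x y =>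
  lexGE ((thetaDot r y).reverse) ((thetaDot r x).reverse)

/-- The inverse dual S lex-cel `R^{IDSL}`. -/
def idslexcel [DecidableEq X] : SRSMap X := fun r x y => dslexcel r y x

/-- The vector `θ̃_≿(x)` used by the S lex-cel with precedence on unanimity. -/
def tildeTheta [DecidableEq X] (r : CoalRanking X) (x : X) : List ℕ :=
  r.classes.map (fun C => if cnt x C = C.card then 2 else if 0 < cnt x C then 1 else 0)

/-- The S lex-cel with a particular precedence on unanimity `R^{SLUN}`. -/
def slun [DecidableEq X] : SRSMap X := fun r x y =>
  lexGE (tildeTheta r x) (tildeTheta r y)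

/-- The S sum score `Σ_k sign(x_k)`. -/
def ssum [DecidableEq X] (r : CoalRanking X) (x : X) : ℕ := (thetaDot r x).sum

/-- The S sum rule with tie-breaking by S lex-cel `R^{SSUM,SL}`. -/
def ssumSL [DecidableEq X] : SRSMap X := fun r x y =>
  ssum r y < ssum r x ∨ (ssum r x = ssum r y ∧ slexcel r x y)

end SocRank

open SocRank

/-! Anti-plurality compares individuals by the number of coalitions of the bottom class
containing them. The bottom class of a bottom-aligned sum is the disjoint union of the two
bottom classes, so these scores add up, and comparing additive scores is consistent.
In a concatenation `≿₁ · ≿₂`, and in a top-aligned sum `≿₁ ⊨ ≿₂` with `≿₁` shorter than `≿₂`,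
the bottom class is that of `≿₂`: the strict preference of `x` over `y` in `≿₁ : {y}` is then
lost against their tie in `≿₂ : {x} ≻ {x, y}`. -/

namespace SocRank

section FoldrUnion

variable {α : Type*} [DecidableEq α]

lemma mem_foldr_union {l : List (Finset α)} {a : α} :
    a ∈ l.foldr (· ∪ ·) ∅ ↔ ∃ s ∈ l, a ∈ s := by
  induction l with
  | nil => simp
  | cons s l ih => simp [ih]

lemma subset_foldr_union_of_mem {l : List (Finset α)} {s : Finset α} (hs : s ∈ l) :
    s ⊆ l.foldr (· ∪ ·) ∅ :=
  fun _ ha => mem_foldr_union.2 ⟨s, hs, ha⟩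

lemma disjoint_foldr_union_right {l : List (Finset α)} {t : Finset α}
    (h : ∀ s ∈ l, Disjoint t s) : Disjoint t (l.foldr (· ∪ ·) ∅) := by
  rw [Finset.disjoint_right]
  intro a ha hat
  obtain ⟨s, hs, has⟩ := mem_foldr_union.1 ha
  exact Finset.disjoint_left.1 (h s hs) hat has

end FoldrUnion

namespace CoalRanking

variable {X : Type*} [DecidableEq X]

lemma mem_zipUnion {L M : List (Finset (Finset X))} {C : Finset (Finset X)}
    (hC : C ∈ zipUnion L M) : C ∈ L ∨ C ∈ M ∨ ∃ A ∈ L, ∃ B ∈ M, C = A ∪ B := by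
  fun_induction zipUnion L M with
  | case1 => exact Or.inr (Or.inl hC)
  | case2 => exact Or.inl hC
  | case3 A L B M ih =>
    rcases List.mem_cons.1 hC with rfl | hC
    · exact Or.inr (Or.inr ⟨A, by simp, B, by simp, rfl⟩)
    · rcases ih hC with h | h | ⟨A', hA', B', hB', rfl⟩
      · exact Or.inl (List.mem_cons_of_mem _ h)
      · exact Or.inr (Or.inl (List.mem_cons_of_mem _ h))
      · exact Or.inr (Or.inr ⟨A', List.mem_cons_of_mem _ hA', B', List.mem_cons_of_mem _ hB', rfl⟩)

lemma subset_union_of_mem_zipUnion {L M : List (Finset (Finset X))} {C : Finset (Finset X)}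
    (hC : C ∈ zipUnion L M) : C ⊆ L.foldr (· ∪ ·) ∅ ∪ M.foldr (· ∪ ·) ∅ := by
  rcases mem_zipUnion hC with h | h | ⟨A, hA, B, hB, rfl⟩
  · exact (subset_foldr_union_of_mem h).trans Finset.subset_union_left
  · exact (subset_foldr_union_of_mem h).trans Finset.subset_union_right
  · exact Finset.union_subset_union (subset_foldr_union_of_mem hA) (subset_foldr_union_of_mem hB)

lemma pairwise_disjoint_zipUnion {L M : List (Finset (Finset X))} (hL : L.Pairwise Disjoint)
    (hM : M.Pairwise Disjoint) (hLM : Disjoint (L.foldr (· ∪ ·) ∅) (M.foldr (· ∪ ·) ∅)) :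
    (zipUnion L M).Pairwise Disjoint := by
  fun_induction zipUnion L M with
  | case1 => exact hM
  | case2 => exact hL
  | case3 A L B M ih =>
    rw [List.pairwise_cons] at hL hM ⊢
    simp only [List.foldr_cons, Finset.disjoint_union_left, Finset.disjoint_union_right] at hLM
    refine ⟨fun C hC => ?_, ih hL.2 hM.2 hLM.2.2⟩
    refine Finset.disjoint_of_subset_right (subset_union_of_mem_zipUnion hC) ?_
    simp only [Finset.disjoint_union_left, Finset.disjoint_union_right]
    exact ⟨⟨disjoint_foldr_union_right hL.1, hLM.1.2.symm⟩,
      ⟨hLM.2.1, disjoint_foldr_union_right hM.1⟩⟩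

lemma head?_getD_zipUnion (L M : List (Finset (Finset X))) :
    (zipUnion L M).head?.getD ∅ = L.head?.getD ∅ ∪ M.head?.getD ∅ := by
  fun_cases zipUnion L M <;> simp

lemma getLast?_zipUnion_of_length_lt {L M : List (Finset (Finset X))}
    (hLM : L.length < M.length) : (zipUnion L M).getLast? = M.getLast? := by
  fun_induction zipUnion L M with
  | case1 => rfl
  | case2 => simp at hLM
  | case3 A L B M ih =>
    have ih := ih (by simpa using hLM)
    have hM : M ≠ [] := List.ne_nil_of_length_pos (by simp at hLM; omega)
    have hZ : zipUnion L M ≠ [] := by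
      rw [← List.getLast?_isSome, ih, List.getLast?_isSome]
      exact hM
    rw [List.getLast?_cons_of_ne_nil hZ, List.getLast?_cons_of_ne_nil hM, ih]

def concatSum (r₁ r₂ : CoalRanking X) (h : Disjoint r₁.domain r₂.domain) : CoalRanking X where
  classes := r₁.classes ++ r₂.classes
  class_nonempty C hC := (List.mem_append.1 hC).elim (r₁.class_nonempty C) (r₂.class_nonempty C)
  coal_nonempty C hC := (List.mem_append.1 hC).elim (r₁.coal_nonempty C) (r₂.coal_nonempty C)
  classes_disjoint := List.pairwise_append.2 ⟨r₁.classes_disjoint, r₂.classes_disjoint,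
    fun _ hA _ hB => h.mono (subset_foldr_union_of_mem hA) (subset_foldr_union_of_mem hB)⟩

def topAlignedSum (r₁ r₂ : CoalRanking X) (h : Disjoint r₁.domain r₂.domain) :
    CoalRanking X where
  classes := zipUnion r₁.classes r₂.classes
  class_nonempty C hC := by
    rcases mem_zipUnion hC with h | h | ⟨A, hA, B, -, rfl⟩
    · exact r₁.class_nonempty C h
    · exact r₂.class_nonempty C h
    · exact (r₁.class_nonempty A hA).mono Finset.subset_union_left
  coal_nonempty C hC S hS := by
    rcases mem_zipUnion hC with h | h | ⟨A, hA, B, hB, rfl⟩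
    · exact r₁.coal_nonempty C h S hS
    · exact r₂.coal_nonempty C h S hS
    · exact (Finset.mem_union.1 hS).elim (r₁.coal_nonempty A hA S) (r₂.coal_nonempty B hB S)
  classes_disjoint := pairwise_disjoint_zipUnion r₁.classes_disjoint r₂.classes_disjoint h

def ofList (l : List (Finset X)) (hne : ∀ S ∈ l, S.Nonempty) (hl : l.Nodup) :
    CoalRanking X where
  classes := l.map ({·})
  class_nonempty C hC := by
    obtain ⟨S, -, rfl⟩ := List.mem_map.1 hC
    exact Finset.singleton_nonempty S
  coal_nonempty C hC S hS := by
    obtain ⟨T, hT, rfl⟩ := List.mem_map.1 hC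
    rw [Finset.mem_singleton.1 hS]
    exact hne T hT
  classes_disjoint := List.Pairwise.map _ (fun _ _ => Finset.disjoint_singleton.2) hl

def lastClass (r : CoalRanking X) : Finset (Finset X) := r.classes.getLastD ∅

lemma lastClass_subset_domain (r : CoalRanking X) : r.lastClass ⊆ r.domain := by
  simpa [lastClass, domain] using
    subset_foldr_union_of_mem (List.getLastD_mem_cons (l := r.classes) (a := ∅))

lemma lastClass_of_isBottomAlignedSum {r r₁ r₂ : CoalRanking X}
    (h : IsBottomAlignedSum r r₁ r₂) : r.lastClass = r₁.lastClass ∪ r₂.lastClass := by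
  simpa [lastClass, h.2] using head?_getD_zipUnion r₁.classes.reverse r₂.classes.reverse

lemma lastClass_concatSum (r₁ r₂ : CoalRanking X) (h : Disjoint r₁.domain r₂.domain)
    (h₂ : r₂.classes ≠ []) : (concatSum r₁ r₂ h).lastClass = r₂.lastClass := by
  obtain ⟨C, hC⟩ := Option.isSome_iff_exists.1 (List.getLast?_isSome.2 h₂)
  simp [lastClass, concatSum, hC]

lemma lastClass_topAlignedSum (r₁ r₂ : CoalRanking X) (h : Disjoint r₁.domain r₂.domain)
    (hlen : r₁.classes.length < r₂.classes.length) :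
    (topAlignedSum r₁ r₂ h).lastClass = r₂.lastClass := by
  simp [lastClass, topAlignedSum, getLast?_zipUnion_of_length_lt hlen]

end CoalRanking

open CoalRanking

section Solutions

variable {X : Type*} {R : SRSMap X} {r r₁ r₂ : CoalRanking X}

lemma consistentAt_of_score_eq_add (s : CoalRanking X → X → ℕ)
    (hR : ∀ r x y, R r x y ↔ s r x ≤ s r y) (hs : ∀ x, s r x = s r₁ x + s r₂ x) :
    ConsistentAt R r₁ r₂ r := by
  intro x y
  simp only [Ind, Pref, hR, hs]
  omega

lemma not_consistentAt_of_eq_right (hr : R r = R r₂) {x y : X} (hP : Pref R r₁ x y)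
    (hI : Ind R r₂ x y) : ¬ ConsistentAt R r₁ r₂ r :=
  fun h => ((h x y).2.2.1 hP hI).2 (hr ▸ hI.2)

end Solutions

section Antiplurality

variable {X : Type*} [DecidableEq X]

lemma cnt_union (x : X) {A B : Finset (Finset X)} (h : Disjoint A B) :
    cnt x (A ∪ B) = cnt x A + cnt x B := by
  rw [cnt, cnt, cnt, Finset.filter_union,
    Finset.card_union_of_disjoint (h.mono (Finset.filter_subset _ _) (Finset.filter_subset _ _))]

lemma cnt_singleton (x : X) (S : Finset X) : cnt x {S} = if x ∈ S then 1 else 0 := by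
  rw [cnt, Finset.filter_singleton]
  split_ifs <;> rfl

lemma antiplurality_iff {r : CoalRanking X} {x y : X} :
    antiplurality r x y ↔ cnt x r.lastClass ≤ cnt y r.lastClass := by
  have (z : X) : (theta r z).getLastD 0 = cnt z r.lastClass := List.getLastD_map (a := ∅)
  rw [antiplurality, this, this]

lemma antiplurality_congr {r r' : CoalRanking X} (h : r.lastClass = r'.lastClass) :
    antiplurality r = antiplurality r' := by
  ext x y
  rw [antiplurality_iff, antiplurality_iff, h]

theorem antiplurality_bcon : BCON (antiplurality : SRSMap X) := by
  intro r₁ r₂ r h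
  refine consistentAt_of_score_eq_add (fun r x => cnt x r.lastClass)
    (fun _ _ _ => antiplurality_iff) fun x => ?_
  rw [lastClass_of_isBottomAlignedSum h, cnt_union]
  exact h.1.mono r₁.lastClass_subset_domain r₂.lastClass_subset_domain

lemma exists_antiplurality_pref_ind {x y : X} (hxy : x ≠ y) :
    ∃ r₁ r₂ : CoalRanking X, Disjoint r₁.domain r₂.domain ∧
      r₁.classes.length < r₂.classes.length ∧
      Pref antiplurality r₁ x y ∧ Ind antiplurality r₂ x y := by
  have hpair (z : X) : ({z} : Finset X) ≠ {x, y} := fun h => by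
    simpa [Finset.card_pair hxy] using congrArg Finset.card h
  refine ⟨ofList [{y}] (by simp) (by simp), ofList [{x}, {x, y}] (by simp) (by simp [hpair]),
    ?_, by simp [ofList], ?_, ?_⟩
  · simp [domain, ofList, hxy.symm, hpair]
  · simp [Pref, antiplurality_iff, lastClass, ofList, cnt_singleton, hxy]
  · simp [Ind, antiplurality_iff, lastClass, ofList, cnt_singleton]

theorem antiplurality_not_ccon {x y : X} (hxy : x ≠ y) : ¬ CCON (antiplurality : SRSMap X) := by
  obtain ⟨r₁, r₂, hd, hlen, hP, hI⟩ := exists_antiplurality_pref_ind hxy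
  have hr₂ : r₂.classes ≠ [] := List.ne_nil_of_length_pos (by omega)
  exact fun h => not_consistentAt_of_eq_right
    (antiplurality_congr (lastClass_concatSum r₁ r₂ hd hr₂)) hP hI (h _ _ _ ⟨hd, rfl⟩)

theorem antiplurality_not_tcon {x y : X} (hxy : x ≠ y) : ¬ TCON (antiplurality : SRSMap X) := by
  obtain ⟨r₁, r₂, hd, hlen, hP, hI⟩ := exists_antiplurality_pref_ind hxy
  exact fun h => not_consistentAt_of_eq_right
    (antiplurality_congr (lastClass_topAlignedSum r₁ r₂ hd hlen)) hP hI (h _ _ _ ⟨hd, rfl⟩)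

end Antiplurality

end SocRank

/-- anti-plurality satisfies BCON but satisfies neither CCON nor TCON. -/
theorem antiplurality_bcon_not_ccon_not_tcon {X : Type*} [DecidableEq X] [Fintype X]
    (hX : 3 ≤ Fintype.card X) :
    BCON (antiplurality : SRSMap X) ∧ ¬ CCON (antiplurality : SRSMap X) ∧
      ¬ TCON (antiplurality : SRSMap X) := by
  obtain ⟨x, y, hxy⟩ := Fintype.exists_pair_of_one_lt_card (by omega : 1 < Fintype.card X)
  exact ⟨antiplurality_bcon, antiplurality_not_ccon hxy, antiplurality_not_tcon hxy⟩
end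

section
/- The intersection initial segment solution R^IIS satisfies none of concatenation consistency (CCON), top-aligned consistency (TCON), and bottom-aligned consistency (BCON). -/
/-!
Take distinct individuals `a`, `b`, `c`. The one-class ranking `{a}` puts `a` strictly above `b`,
and the one-class ranking `{c}` ties them, since neither lies in `{c}`. The IIS solution only looks
at an initial segment of classes, so a sum with `{c}` in its top class ties `a` and `b` again.
This happens for the concatenation `{c} · {a}`, violating condition (2), and for the aligned sums
`{a} ⊨ {c} = {a} ⫤ {c}` (a single class), violating condition (3).
-/

namespace SocRank

open CoalRanking

variable {X : Type*}

namespace CoalRanking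

variable [DecidableEq X]

lemma subset_domain {r : CoalRanking X} {C : Finset (Finset X)} (hC : C ∈ r.classes) :
    C ⊆ r.domain := by
  unfold domain
  generalize r.classes = L at hC
  induction L with
  | nil => simp at hC
  | cons D L ih =>
    rcases List.mem_cons.1 hC with rfl | hC
    · exact Finset.subset_union_left
    · exact (ih hC).trans Finset.subset_union_right

def single (C : Finset (Finset X)) (hC : C.Nonempty) (hSC : ∀ S ∈ C, S.Nonempty) :
    CoalRanking X where
  classes := [C]
  class_nonempty := by simpa using hC
  coal_nonempty := by simpa using hSC
  classes_disjoint := List.pairwise_singleton _ _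

@[simp]
lemma domain_single {C : Finset (Finset X)} {hC : C.Nonempty} {hSC : ∀ S ∈ C, S.Nonempty} :
    (single C hC hSC).domain = C := by
  simp [domain, single]

def concat (r₁ r₂ : CoalRanking X) (h : Disjoint r₁.domain r₂.domain) : CoalRanking X where
  classes := r₁.classes ++ r₂.classes
  class_nonempty C hC := (List.mem_append.1 hC).elim (r₁.class_nonempty C) (r₂.class_nonempty C)
  coal_nonempty C hC := (List.mem_append.1 hC).elim (r₁.coal_nonempty C) (r₂.coal_nonempty C)
  classes_disjoint := List.pairwise_append.2 ⟨r₁.classes_disjoint, r₂.classes_disjoint,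
    fun _ hA _ hB => h.mono (subset_domain hA) (subset_domain hB)⟩

lemma isConcatSum_concat (r₁ r₂ : CoalRanking X) (h : Disjoint r₁.domain r₂.domain) :
    IsConcatSum (concat r₁ r₂ h) r₁ r₂ :=
  ⟨h, rfl⟩

section Single

variable {C D : Finset (Finset X)} {hC : C.Nonempty} {hSC : ∀ S ∈ C, S.Nonempty}
  {hD : D.Nonempty} {hSD : ∀ S ∈ D, S.Nonempty}
  {hCD : (C ∪ D).Nonempty} {hSCD : ∀ S ∈ C ∪ D, S.Nonempty}

lemma isTopAlignedSum_single (h : Disjoint C D) :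
    IsTopAlignedSum (single (C ∪ D) hCD hSCD) (single C hC hSC) (single D hD hSD) :=
  ⟨by simpa using h, rfl⟩

lemma isBottomAlignedSum_single (h : Disjoint C D) :
    IsBottomAlignedSum (single (C ∪ D) hCD hSCD) (single C hC hSC) (single D hD hSD) :=
  ⟨by simpa using h, rfl⟩

end Single

end CoalRanking

section IIS

variable [DecidableEq X] {r : CoalRanking X} {C : Finset (Finset X)}
  {L : List (Finset (Finset X))} {x y : X}

lemma eIIS_eq_zero (hr : r.classes = C :: L) {S : Finset X} (hS : S ∈ C) (hx : x ∉ S) :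
    eIIS r x = 0 := by
  have : ¬ ∀ T ∈ C, x ∈ T := fun h => hx (h S hS)
  simp [eIIS, hr, this]

lemma eIIS_pos (hr : r.classes = C :: L) (hx : ∀ S ∈ C, x ∈ S) : 0 < eIIS r x := by
  rw [eIIS, hr, List.takeWhile_cons_of_pos (by simpa using hx)]
  exact Nat.succ_pos _

lemma ind_iis_iff : Ind iis r x y ↔ eIIS r x = eIIS r y := by
  simp only [Ind, iis]
  omega

lemma ind_iis_of_notMem (hr : r.classes = C :: L) {S : Finset X} (hS : S ∈ C) (hx : x ∉ S)
    (hy : y ∉ S) : Ind iis r x y :=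
  ind_iis_iff.2 ((eIIS_eq_zero hr hS hx).trans (eIIS_eq_zero hr hS hy).symm)

lemma pref_iis_iff : Pref iis r x y ↔ eIIS r y < eIIS r x := by
  simp only [Pref, iis]
  omega

end IIS

section Consistency

variable {R : SRSMap X} {r₁ r₂ r : CoalRanking X} {x y : X}

lemma not_consistentAt_of_ind_pref (h₁ : Ind R r₁ x y) (h₂ : Pref R r₂ x y)
    (h : Ind R r x y) : ¬ ConsistentAt R r₁ r₂ r :=
  fun hR => ((hR x y).2.1 h₁ h₂).2 h.2

lemma not_consistentAt_of_pref_ind (h₁ : Pref R r₁ x y) (h₂ : Ind R r₂ x y)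
    (h : Ind R r x y) : ¬ ConsistentAt R r₁ r₂ r :=
  fun hR => ((hR x y).2.2.1 h₁ h₂).2 h.2

end Consistency

end SocRank

open SocRank

/-- IIS satisfies none of CCON, TCON and BCON. -/
theorem iis_not_ccon_not_tcon_not_bcon {X : Type*} [DecidableEq X] [Fintype X]
    (hX : 3 ≤ Fintype.card X) :
    ¬ CCON (iis : SRSMap X) ∧ ¬ TCON (iis : SRSMap X) ∧ ¬ BCON (iis : SRSMap X) := by
  obtain ⟨a, b, c, hab, hac, hbc⟩ := Fintype.two_lt_card_iff.mp hX
  have hdisj : Disjoint ({{a}} : Finset (Finset X)) {{c}} := by simpa using hac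
  let rA : CoalRanking X := CoalRanking.single {{a}} (by simp) (by simp)
  let rC : CoalRanking X := CoalRanking.single {{c}} (by simp) (by simp)
  have hA : Pref iis rA a b := pref_iis_iff.2 <|
    (eIIS_eq_zero rfl (Finset.mem_singleton_self _) (by simpa using hab.symm)).trans_lt
      (eIIS_pos rfl (by simp))
  have hC : Ind iis rC a b :=
    ind_iis_of_notMem rfl (Finset.mem_singleton_self _) (by simpa using hac) (by simpa using hbc)
  have hAC : Ind iis (CoalRanking.single ({{a}} ∪ {{c}}) (by simp) (by simp)) a b :=
    ind_iis_of_notMem (S := {c}) rfl (by simp) (by simpa using hac) (by simpa using hbc)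
  refine ⟨fun h => ?_, fun h => ?_, fun h => ?_⟩
  · have hCA : Ind iis (CoalRanking.concat rC rA (by simpa [rA, rC] using hac.symm)) a b :=
      ind_iis_of_notMem (S := {c}) rfl (by simp) (by simpa using hac) (by simpa using hbc)
    exact not_consistentAt_of_ind_pref hC hA hCA
      (h _ _ _ (CoalRanking.isConcatSum_concat _ _ _))
  · exact not_consistentAt_of_pref_ind hA hC hAC
      (h _ _ _ (CoalRanking.isTopAlignedSum_single hdisj))
  · exact not_consistentAt_of_pref_ind hA hC hAC
      (h _ _ _ (CoalRanking.isBottomAlignedSum_single hdisj))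
end
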